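/- There exist constants c₁, c₂ > 0, depending only on α and d, with the following property. Let n ≥ 1 and let z_0, …, z_n be a path in ℤ^d such that max{|z_0|, |z_n|, |z_0 − z_n|_1} ≥ n. Then c₁ · n · (max(|z_0|,|z_n|))^α ≤ Σ_{i=0}^n ν_{z_i} ≤ c₂ · n · (max(|z_0|,|z_n|))^α. -/

import Mathlib

/-!
Write `M = max(|z₀|, |zₙ|)`. The norm moves by at most one per step, and the hypothesis forces
`n ≤ 2dM` because `|z₀ - zₙ|₁ ≤ 2dM`; hence `M ≥ 1` and `M - n ≤ |zᵢ| ≤ (2d+1)M` along the path.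
Counting terms gives the upper bound for `α ≥ 0` and the lower bound for `α ≤ 0`. For `α ≥ 0` the
lower bound comes from the `min(n, M/2) + 1` points next to the endpoint of norm `M`, all of norm
at least `M/2`.

For `α < 0` the upper bound is immediate when `2n ≤ M`, since then every `|zᵢ| ≥ M/2`. Otherwise
`|z₀|₁ + |zₙ|₁ ≥ n` makes `|zᵢ|₁` at least the distance from `i` to some `m ≤ n`, so the sum is at
most `2 d^(-α) ∑_{j ≤ n} max(j,1)^α`, and this discrete version of `∫₀ⁿ x^α dx = n^(1+α)/(1+α)` is
`O(n^(1+α)) = O(n M^α)` because `M ≤ 2n`.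
-/

open scoped BigOperators

/-- ℓ∞ norm on ℤ^d, as a natural number. -/
def linf {d : ℕ} (x : Fin d → ℤ) : ℕ :=
  Finset.univ.sup fun i => (x i).natAbs

/-- ℓ¹ norm on ℤ^d, as a natural number. -/
def l1 {d : ℕ} (x : Fin d → ℤ) : ℕ :=
  ∑ i, (x i).natAbs

/-- `ν x = (max(|x|,1))^α`. -/
noncomputable def nu (α : ℝ) {d : ℕ} (x : Fin d → ℤ) : ℝ :=
  ((max (linf x) 1 : ℕ) : ℝ) ^ α

/-- The conductance `μ x y = (max(|x|,|y|))^(-α)` if `|x-y|₁ = 1`, and `0` otherwise. -/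
noncomputable def mu (α : ℝ) {d : ℕ} (x y : Fin d → ℤ) : ℝ :=
  if l1 (x - y) = 1 then ((max (linf x) (linf y) : ℕ) : ℝ) ^ (-α) else 0

/-- `z 0, …, z m` is a path: consecutive points are at ℓ¹-distance one. -/
def IsPath {d : ℕ} (z : ℕ → Fin d → ℤ) (m : ℕ) : Prop :=
  ∀ i < m, l1 (z (i + 1) - z i) = 1

/-- The metric `ρ(x,y)`: `0` if `x = y`, otherwise the infimum of `∑ ν (z i)` over
paths from `x` to `y`. -/
noncomputable def rho (α : ℝ) {d : ℕ} (x y : Fin d → ℤ) : ℝ :=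
  if x = y then 0
  else sInf {S : ℝ | ∃ (m : ℕ) (z : ℕ → Fin d → ℤ), IsPath z m ∧ z 0 = x ∧ z m = y ∧
    S = ∑ i ∈ Finset.range (m + 1), nu α (z i)}

/-- `ρ_x(r) = (max(|x|,r))^α · r`. -/
noncomputable def rhox (α : ℝ) {d : ℕ} (x : Fin d → ℤ) (r : ℝ) : ℝ :=
  (max ((linf x : ℕ) : ℝ) r) ^ α * r

/-- `ρ_x⁻¹(r) = (max(|x|, r^{1/(1+α)}))^{-α} · r`, the inverse function of `ρ_x`. -/
noncomputable def rhoxInv (α : ℝ) {d : ℕ} (x : Fin d → ℤ) (r : ℝ) : ℝ :=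
  (max ((linf x : ℕ) : ℝ) (r ^ (1 / (1 + α)))) ^ (-α) * r

/-- `V(x,r) = ν(B(x,r))`, the ν-volume of the ℓ∞-ball of radius `r` about `x`. -/
noncomputable def V (α : ℝ) {d : ℕ} (x : Fin d → ℤ) (r : ℝ) : ℝ :=
  ∑' y : {y : Fin d → ℤ // ((linf (y - x) : ℕ) : ℝ) ≤ r}, nu α y.1

/-- `V_ρ(x,r) = ν(B_ρ(x,r))`, the ν-volume of the ρ-ball of radius `r` about `x`. -/
noncomputable def Vrho (α : ℝ) {d : ℕ} (x : Fin d → ℤ) (r : ℝ) : ℝ :=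
  ∑' y : {y : Fin d → ℤ // rho α x y ≤ r}, nu α y.1

section Norms

variable {d : ℕ}

lemma l1_sub_comm (x y : Fin d → ℤ) : l1 (x - y) = l1 (y - x) := by
  rw [← neg_sub y x]
  simp only [l1, Pi.neg_apply, Int.natAbs_neg]

lemma l1_add_le (x y : Fin d → ℤ) : l1 (x + y) ≤ l1 x + l1 y := by
  simp only [l1, Pi.add_apply, ← Finset.sum_add_distrib]
  exact Finset.sum_le_sum fun i _ => Int.natAbs_add_le _ _

lemma linf_add_le (x y : Fin d → ℤ) : linf (x + y) ≤ linf x + linf y :=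
  Finset.sup_le fun _ hi => (Int.natAbs_add_le _ _).trans <|
    add_le_add (Finset.le_sup (f := fun i => (x i).natAbs) hi)
      (Finset.le_sup (f := fun i => (y i).natAbs) hi)

lemma linf_le_l1 (x : Fin d → ℤ) : linf x ≤ l1 x :=
  Finset.sup_le fun _ hi => Finset.single_le_sum (f := fun i => (x i).natAbs) (by simp) hi

lemma l1_le_mul_linf (x : Fin d → ℤ) : l1 x ≤ d * linf x := by
  simpa [l1] using Finset.sum_le_card_nsmul Finset.univ (fun i => (x i).natAbs) (linf x)
    fun i hi => Finset.le_sup (f := fun i => (x i).natAbs) hi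

lemma l1_le_l1_add_l1_sub (x y : Fin d → ℤ) : l1 x ≤ l1 y + l1 (x - y) := by
  simpa using l1_add_le y (x - y)

lemma linf_le_linf_add_l1_sub (x y : Fin d → ℤ) : linf x ≤ linf y + l1 (x - y) := by
  simpa using (linf_add_le y (x - y)).trans (Nat.add_le_add_left (linf_le_l1 _) _)

lemma l1_sub_le_l1_add_l1 (x y : Fin d → ℤ) : l1 (x - y) ≤ l1 x + l1 y := by
  simpa [l1, sub_eq_add_neg] using l1_add_le x (-y)

lemma le_two_mul_max_linf {n : ℕ} {x y : Fin d → ℤ} (hd : 1 ≤ d)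
    (hlen : n ≤ max (max (linf x) (linf y)) (l1 (x - y))) :
    n ≤ 2 * d * max (linf x) (linf y) := by
  have hx := l1_le_mul_linf x
  have hy := l1_le_mul_linf y
  have hxy := l1_sub_le_l1_add_l1 x y
  have hdx : d * linf x ≤ d * max (linf x) (linf y) := Nat.mul_le_mul_left d (le_max_left _ _)
  have hdy : d * linf y ≤ d * max (linf x) (linf y) := Nat.mul_le_mul_left d (le_max_right _ _)
  have hM : max (linf x) (linf y) ≤ d * max (linf x) (linf y) := Nat.le_mul_of_pos_left _ hd
  rw [mul_assoc]
  omega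

lemma le_l1_add_l1 {n : ℕ} {x y : Fin d → ℤ}
    (hlen : n ≤ max (max (linf x) (linf y)) (l1 (x - y))) : n ≤ l1 x + l1 y := by
  have := linf_le_l1 x
  have := linf_le_l1 y
  have := l1_sub_le_l1_add_l1 x y
  omega

end Norms

namespace IsPath

variable {d n : ℕ} {z : ℕ → Fin d → ℤ}

lemma l1_sub_le_dist (hz : IsPath z n) {i j : ℕ} (hi : i ≤ n) (hj : j ≤ n) :
    l1 (z i - z j) ≤ Nat.dist i j := by
  wlog hij : i ≤ j generalizing i j
  · rw [l1_sub_comm, Nat.dist_comm]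
    exact this hj hi (by omega)
  rw [Nat.dist_eq_sub_of_le hij, l1_sub_comm]
  induction j, hij using Nat.le_induction with
  | base => simp [l1]
  | succ j hij ih =>
    have htri := l1_add_le (z (j + 1) - z j) (z j - z i)
    rw [sub_add_sub_cancel] at htri
    have := hz j (by omega)
    have := ih (by omega)
    omega

lemma linf_le_add_dist (hz : IsPath z n) {i j : ℕ} (hi : i ≤ n) (hj : j ≤ n) :
    linf (z i) ≤ linf (z j) + Nat.dist i j :=
  (linf_le_linf_add_l1_sub _ _).trans (Nat.add_le_add_left (hz.l1_sub_le_dist hi hj) _)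

lemma l1_le_add_dist (hz : IsPath z n) {i j : ℕ} (hi : i ≤ n) (hj : j ≤ n) :
    l1 (z i) ≤ l1 (z j) + Nat.dist i j :=
  (l1_le_l1_add_l1_sub _ _).trans (Nat.add_le_add_left (hz.l1_sub_le_dist hi hj) _)

lemma reverse (hz : IsPath z n) : IsPath (fun i => z (n - i)) n := by
  intro i hi
  have h := hz (n - i - 1) (by omega)
  rwa [show n - i - 1 + 1 = n - i by omega, l1_sub_comm, show n - i - 1 = n - (i + 1) by omega] at h

end IsPath

lemma mul_rpow_sub_one_le_rpow_sub_rpow {p x : ℝ} (hp0 : 0 ≤ p) (hp1 : p ≤ 1) (hx : 1 ≤ x) :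
    p * x ^ (p - 1) ≤ x ^ p - (x - 1) ^ p := by
  have hx0 : 0 < x := by linarith
  have hinv : x⁻¹ ≤ 1 := inv_le_one_of_one_le₀ hx
  have hbern : (1 + -x⁻¹) ^ p ≤ 1 + p * -x⁻¹ :=
    rpow_one_add_le_one_add_mul_self (by linarith) hp0 hp1
  have hfactor : (x - 1) ^ p = x ^ p * (1 + -x⁻¹) ^ p := by
    rw [← Real.mul_rpow hx0.le (by linarith)]
    congr 1
    field_simp
    ring
  have := mul_le_mul_of_nonneg_left hbern (Real.rpow_pos_of_pos hx0 p).le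
  rw [hfactor, Real.rpow_sub_one hx0.ne']
  linarith [show x ^ p * (1 + p * -x⁻¹) = x ^ p - p * (x ^ p / x) by ring]

lemma sum_range_max_one_rpow_le {α : ℝ} (hα : -1 < α) (hα0 : α ≤ 0) (n : ℕ) :
    ∑ i ∈ Finset.range (n + 1), ((max i 1 : ℕ) : ℝ) ^ α ≤ 1 + (n : ℝ) ^ (1 + α) / (1 + α) := by
  have hp : 0 < 1 + α := by linarith
  induction n with
  | zero => simp [Real.zero_rpow hp.ne']
  | succ n ih =>
    have hstep := mul_rpow_sub_one_le_rpow_sub_rpow (x := n + 1) hp.le (by linarith)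
      (by linarith [n.cast_nonneg (α := ℝ)])
    rw [add_sub_cancel_right, add_sub_cancel_left, mul_comm, ← le_div_iff₀ hp, sub_div] at hstep
    rw [Finset.sum_range_succ, max_eq_left (by omega), Nat.cast_succ]
    linarith

lemma sum_range_dist_le (f : ℕ → ℝ) (hf : ∀ j, 0 ≤ f j) {m n : ℕ} (hm : m ≤ n) :
    ∑ i ∈ Finset.range (n + 1), f (Nat.dist i m) ≤ 2 * ∑ j ∈ Finset.range (n + 1), f j := by
  have hinj : ∀ s : Finset ℕ, Set.InjOn (Nat.dist · m) s → (∀ i ∈ s, i ≤ n) →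
      ∑ i ∈ s, f (Nat.dist i m) ≤ ∑ j ∈ Finset.range (n + 1), f j := by
    intro s hs hsn
    rw [← Finset.sum_image hs]
    refine Finset.sum_le_sum_of_subset_of_nonneg (fun j hj => ?_) fun j _ _ => hf j
    obtain ⟨i, hi, rfl⟩ := Finset.mem_image.mp hj
    have := hsn i hi
    simp only [Finset.mem_range, Nat.dist]
    omega
  rw [← Finset.sum_range_add_sum_Ico _ (by omega : m + 1 ≤ n + 1), two_mul]
  gcongr
  · refine hinj _ (fun a ha b hb h => ?_) fun i hi => ?_ <;>
      simp only [Finset.coe_range, Set.mem_Iio, Finset.mem_range, Nat.dist] at * <;> omega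
  · refine hinj _ (fun a ha b hb h => ?_) fun i hi => ?_ <;>
      simp only [Finset.coe_Ico, Set.mem_Ico, Finset.mem_Ico, Nat.dist] at * <;> omega

section PathVolume

variable {d n : ℕ} {z : ℕ → Fin d → ℤ} {α : ℝ}

lemma IsPath.max_linf_one_le (hz : IsPath z n) (hd : 1 ≤ d) (hn : 1 ≤ n)
    (hlen : n ≤ max (max (linf (z 0)) (linf (z n))) (l1 (z 0 - z n))) {i : ℕ} (hi : i ≤ n) :
    max (linf (z i)) 1 ≤ (2 * d + 1) * max (linf (z 0)) (linf (z n)) := by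
  have hlen' := le_two_mul_max_linf hd hlen
  have hi0 := hz.linf_le_add_dist hi (Nat.zero_le n)
  simp only [Nat.dist] at hi0
  rw [add_one_mul]
  omega

lemma le_sum_nu_of_nonpos (hz : IsPath z n) (hd : 1 ≤ d) (hα0 : α ≤ 0) (hn : 1 ≤ n)
    (hlen : n ≤ max (max (linf (z 0)) (linf (z n))) (l1 (z 0 - z n))) :
    (2 * d + 1 : ℝ) ^ α * n * ((max (linf (z 0)) (linf (z n)) : ℕ) : ℝ) ^ α ≤
      ∑ i ∈ Finset.range (n + 1), nu α (z i) := by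
  set M := max (linf (z 0)) (linf (z n))
  have hterm : ∀ i ∈ Finset.range (n + 1), ((2 * d + 1) * M : ℝ) ^ α ≤ nu α (z i) :=
    fun i hi => Real.rpow_le_rpow_of_nonpos (by positivity)
      (by exact_mod_cast hz.max_linf_one_le hd hn hlen (Finset.mem_range_succ_iff.mp hi)) hα0
  calc (2 * d + 1 : ℝ) ^ α * n * (M : ℝ) ^ α = n * ((2 * d + 1) * M : ℝ) ^ α := by
        rw [Real.mul_rpow (by positivity) (by positivity)]; ring
    _ ≤ (n + 1) * ((2 * d + 1) * M : ℝ) ^ α := by gcongr; linarith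
    _ ≤ ∑ i ∈ Finset.range (n + 1), nu α (z i) := by
        simpa using Finset.card_nsmul_le_sum _ _ _ hterm

lemma sum_nu_le_of_nonneg (hz : IsPath z n) (hd : 1 ≤ d) (hα0 : 0 ≤ α) (hn : 1 ≤ n)
    (hlen : n ≤ max (max (linf (z 0)) (linf (z n))) (l1 (z 0 - z n))) :
    ∑ i ∈ Finset.range (n + 1), nu α (z i) ≤
      2 * (2 * d + 1 : ℝ) ^ α * n * ((max (linf (z 0)) (linf (z n)) : ℕ) : ℝ) ^ α := by
  set M := max (linf (z 0)) (linf (z n))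
  have hterm : ∀ i ∈ Finset.range (n + 1), nu α (z i) ≤ ((2 * d + 1) * M : ℝ) ^ α :=
    fun i hi => Real.rpow_le_rpow (by positivity)
      (by exact_mod_cast hz.max_linf_one_le hd hn hlen (Finset.mem_range_succ_iff.mp hi)) hα0
  calc ∑ i ∈ Finset.range (n + 1), nu α (z i) ≤ (n + 1) * ((2 * d + 1) * M : ℝ) ^ α := by
        simpa using Finset.sum_le_card_nsmul _ _ _ hterm
    _ ≤ 2 * n * ((2 * d + 1) * M : ℝ) ^ α := by
        gcongr; linarith [(Nat.one_le_cast (α := ℝ)).mpr hn]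
    _ = 2 * (2 * d + 1 : ℝ) ^ α * n * (M : ℝ) ^ α := by
        rw [Real.mul_rpow (by positivity) (by positivity)]; ring

lemma le_sum_nu_of_le_two_mul_linf (hz : IsPath z n) (hd : 1 ≤ d) (hα0 : 0 ≤ α)
    (hlen : n ≤ 2 * d * linf (z 0)) :
    1 / (4 * d * 2 ^ α) * n * (linf (z 0) : ℝ) ^ α ≤ ∑ i ∈ Finset.range (n + 1), nu α (z i) := by
  set M := linf (z 0)
  set t := min n (M / 2)
  have hterm : ∀ i ∈ Finset.range (t + 1), ((M : ℝ) / 2) ^ α ≤ nu α (z i) := by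
    intro i hi
    have hit : i ≤ t := Finset.mem_range_succ_iff.mp hi
    have h0i := hz.linf_le_add_dist (Nat.zero_le n) (hit.trans (min_le_left _ _))
    simp only [Nat.dist] at h0i
    have hMi : M ≤ 2 * linf (z i) := by omega
    have hmax : linf (z i) ≤ max (linf (z i)) 1 := le_max_left _ _
    refine Real.rpow_le_rpow (by positivity) ?_ hα0
    rw [div_le_iff₀ two_pos]
    exact_mod_cast hMi.trans (by omega)
  have hcount : (n : ℝ) ≤ 4 * d * (t + 1) := by
    have hdr : (1 : ℝ) ≤ d := by exact_mod_cast hd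
    have hlenr : (n : ℝ) ≤ 2 * d * M := by exact_mod_cast hlen
    have ht : t = min n (M / 2) := rfl
    rcases (by omega : n ≤ t ∨ M ≤ 2 * (t + 1)) with h | h
    · have : (n : ℝ) ≤ t := by exact_mod_cast h
      nlinarith
    · have : (M : ℝ) ≤ 2 * (t + 1) := by exact_mod_cast h
      nlinarith
  calc 1 / (4 * d * 2 ^ α) * n * (M : ℝ) ^ α = n / (4 * d) * ((M : ℝ) / 2) ^ α := by
        rw [Real.div_rpow (by positivity) (by positivity)]; field_simp
    _ ≤ (t + 1) * ((M : ℝ) / 2) ^ α := by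
        gcongr; rwa [div_le_iff₀ (by positivity), mul_comm]
    _ ≤ ∑ i ∈ Finset.range (t + 1), nu α (z i) := by
        simpa using Finset.card_nsmul_le_sum _ _ _ hterm
    _ ≤ ∑ i ∈ Finset.range (n + 1), nu α (z i) :=
        Finset.sum_le_sum_of_subset_of_nonneg (Finset.range_subset_range.mpr (by omega))
          fun i _ _ => Real.rpow_nonneg (Nat.cast_nonneg _) α

lemma le_sum_nu_of_nonneg (hz : IsPath z n) (hd : 1 ≤ d) (hα0 : 0 ≤ α)
    (hlen : n ≤ max (max (linf (z 0)) (linf (z n))) (l1 (z 0 - z n))) :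
    1 / (4 * d * 2 ^ α) * n * ((max (linf (z 0)) (linf (z n)) : ℕ) : ℝ) ^ α ≤
      ∑ i ∈ Finset.range (n + 1), nu α (z i) := by
  have hlen' := le_two_mul_max_linf hd hlen
  rcases le_total (linf (z n)) (linf (z 0)) with h | h
  · rw [max_eq_left h] at hlen' ⊢
    exact le_sum_nu_of_le_two_mul_linf hz hd hα0 hlen'
  · rw [max_eq_right h] at hlen' ⊢
    have hrev := le_sum_nu_of_le_two_mul_linf hz.reverse hd hα0 (by simpa using hlen')
    rw [← Finset.sum_range_reflect]
    simpa using hrev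

lemma sum_nu_le_of_two_mul_le (hz : IsPath z n) (hα0 : α ≤ 0) (hn : 1 ≤ n)
    (h2n : 2 * n ≤ max (linf (z 0)) (linf (z n))) :
    ∑ i ∈ Finset.range (n + 1), nu α (z i) ≤
      2 / 2 ^ α * n * ((max (linf (z 0)) (linf (z n)) : ℕ) : ℝ) ^ α := by
  set M := max (linf (z 0)) (linf (z n))
  have hterm : ∀ i ∈ Finset.range (n + 1), nu α (z i) ≤ ((M : ℝ) / 2) ^ α := by
    intro i hi
    have hin := Finset.mem_range_succ_iff.mp hi
    have h0 := hz.linf_le_add_dist (Nat.zero_le n) hin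
    have hn' := hz.linf_le_add_dist le_rfl hin
    simp only [Nat.dist] at h0 hn'
    have hMi : M ≤ 2 * max (linf (z i)) 1 := by omega
    refine Real.rpow_le_rpow_of_nonpos (div_pos (by exact_mod_cast (by omega : 0 < M)) two_pos) ?_ hα0
    rw [div_le_iff₀ two_pos, mul_comm]
    exact_mod_cast hMi
  calc ∑ i ∈ Finset.range (n + 1), nu α (z i) ≤ (n + 1) * ((M : ℝ) / 2) ^ α := by
        simpa using Finset.sum_le_card_nsmul _ _ _ hterm
    _ ≤ 2 * n * ((M : ℝ) / 2) ^ α := by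
        gcongr; linarith [(Nat.one_le_cast (α := ℝ)).mpr hn]
    _ = 2 / 2 ^ α * n * (M : ℝ) ^ α := by
        rw [Real.div_rpow (by positivity) (by positivity)]; ring

/-- Since `|z₀|₁ + |zₙ|₁ ≥ n`, the bounds `|zᵢ|₁ ≥ |z₀|₁ - i` and `|zᵢ|₁ ≥ |zₙ|₁ - (n - i)`
combine to `|zᵢ|₁ ≥ |i - m|` for `m = min |z₀|₁ n`. -/
lemma IsPath.nu_le_rpow_dist_div (hz : IsPath z n) (hd : 1 ≤ d) (hα0 : α ≤ 0)
    (hlen : n ≤ max (max (linf (z 0)) (linf (z n))) (l1 (z 0 - z n))) {i : ℕ} (hi : i ≤ n) :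
    nu α (z i) ≤ ((max (Nat.dist i (min (l1 (z 0)) n)) 1 : ℕ) : ℝ) ^ α / (d : ℝ) ^ α := by
  have h0 := hz.l1_le_add_dist (Nat.zero_le n) hi
  have hn := hz.l1_le_add_dist le_rfl hi
  have hsum := le_l1_add_l1 hlen
  have hdist : Nat.dist i (min (l1 (z 0)) n) ≤ l1 (z i) := by
    simp only [Nat.dist] at h0 hn ⊢
    omega
  have hl1 := l1_le_mul_linf (z i)
  have hmul : d * linf (z i) ≤ d * max (linf (z i)) 1 := Nat.mul_le_mul_left d (le_max_left _ _)
  have hd1 : d ≤ d * max (linf (z i)) 1 := Nat.le_mul_of_pos_right d (by omega)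
  have hmax : max (Nat.dist i (min (l1 (z 0)) n)) 1 ≤ d * max (linf (z i)) 1 := by omega
  rw [← Real.div_rpow (by positivity) (by positivity)]
  refine Real.rpow_le_rpow_of_nonpos (by positivity) ?_ hα0
  rw [div_le_iff₀ (by positivity), mul_comm]
  exact_mod_cast hmax

lemma sum_nu_le_of_le_two_mul (hz : IsPath z n) (hd : 1 ≤ d) (hα : -1 < α) (hα0 : α ≤ 0)
    (hn : 1 ≤ n) (hlen : n ≤ max (max (linf (z 0)) (linf (z n))) (l1 (z 0 - z n)))
    (hM : max (linf (z 0)) (linf (z n)) ≤ 2 * n) :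
    ∑ i ∈ Finset.range (n + 1), nu α (z i) ≤
      2 * (1 + 1 / (1 + α)) / (2 * d) ^ α * n * ((max (linf (z 0)) (linf (z n)) : ℕ) : ℝ) ^ α := by
  set M := max (linf (z 0)) (linf (z n))
  set f : ℕ → ℝ := fun j => ((max j 1 : ℕ) : ℝ) ^ α
  have hp : 0 < 1 + α := by linarith
  have hnr : (1 : ℝ) ≤ n := by exact_mod_cast hn
  have hM1 : 1 ≤ M := by
    have := le_two_mul_max_linf hd hlen
    rcases Nat.eq_zero_or_pos M with h | h
    · simp [M, h] at this; omega
    · exact h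
  have hnp : (1 : ℝ) ≤ (n : ℝ) ^ (1 + α) := Real.one_le_rpow hnr hp.le
  have hnM : (n : ℝ) ^ α ≤ ((M : ℝ) / 2) ^ α :=
    Real.rpow_le_rpow_of_nonpos (by positivity)
      (by rw [div_le_iff₀ two_pos, mul_comm]; exact_mod_cast hM) hα0
  calc ∑ i ∈ Finset.range (n + 1), nu α (z i)
        ≤ ∑ i ∈ Finset.range (n + 1), f (Nat.dist i (min (l1 (z 0)) n)) / (d : ℝ) ^ α :=
        Finset.sum_le_sum fun i hi =>
          hz.nu_le_rpow_dist_div hd hα0 hlen (Finset.mem_range_succ_iff.mp hi)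
    _ ≤ 2 * (1 + (n : ℝ) ^ (1 + α) / (1 + α)) / (d : ℝ) ^ α := by
        rw [← Finset.sum_div]
        gcongr
        exact (sum_range_dist_le f (fun j => by positivity) (min_le_right _ _)).trans
          (by gcongr; exact sum_range_max_one_rpow_le hα hα0 n)
    _ ≤ 2 * ((1 + 1 / (1 + α)) * n * (n : ℝ) ^ α) / (d : ℝ) ^ α := by
        rw [Real.rpow_add (by positivity), Real.rpow_one] at hnp ⊢
        gcongr
        linarith [show (n : ℝ) * n ^ α / (1 + α) = 1 / (1 + α) * n * n ^ α by ring]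
    _ ≤ 2 * ((1 + 1 / (1 + α)) * n * ((M : ℝ) / 2) ^ α) / (d : ℝ) ^ α := by gcongr
    _ = 2 * (1 + 1 / (1 + α)) / (2 * d) ^ α * n * (M : ℝ) ^ α := by
        rw [Real.div_rpow (by positivity) (by positivity), Real.mul_rpow (by positivity)
          (by positivity)]
        ring

lemma sum_nu_le_of_nonpos (hz : IsPath z n) (hd : 1 ≤ d) (hα : -1 < α) (hα0 : α ≤ 0)
    (hn : 1 ≤ n) (hlen : n ≤ max (max (linf (z 0)) (linf (z n))) (l1 (z 0 - z n))) :
    ∑ i ∈ Finset.range (n + 1), nu α (z i) ≤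
      2 * (1 + 1 / (1 + α)) / (2 * d) ^ α * n * ((max (linf (z 0)) (linf (z n)) : ℕ) : ℝ) ^ α := by
  rcases le_total (2 * n) (max (linf (z 0)) (linf (z n))) with h | h
  · refine (sum_nu_le_of_two_mul_le hz hα0 hn h).trans ?_
    have hp : 0 < 1 / (1 + α) := one_div_pos.mpr (by linarith)
    have h2d : (2 * d : ℝ) ^ α ≤ 2 ^ α :=
      Real.rpow_le_rpow_of_nonpos two_pos (by linarith [(Nat.one_le_cast (α := ℝ)).mpr hd]) hα0
    gcongr ?_ * _ * _
    calc (2 : ℝ) / 2 ^ α ≤ 2 / (2 * d) ^ α :=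
          div_le_div_of_nonneg_left zero_le_two (by positivity) h2d
      _ ≤ 2 * (1 + 1 / (1 + α)) / (2 * d) ^ α := by gcongr; linarith
  · exact sum_nu_le_of_le_two_mul hz hd hα hα0 hn hlen (by omega)

end PathVolume

/-- Volume of a path: if `z_0, …, z_n` is a path with
`max{|z_0|, |z_n|, |z_0 - z_n|₁} ≥ n ≥ 1`, then
`c₁ n (max(|z_0|,|z_n|))^α ≤ ∑_{i=0}^n ν_{z_i} ≤ c₂ n (max(|z_0|,|z_n|))^α`. -/
theorem path_volume (d : ℕ) (hd : 1 ≤ d) (α : ℝ) (hα : -1 < α) :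
    ∃ c₁ c₂ : ℝ, 0 < c₁ ∧ 0 < c₂ ∧
      ∀ (n : ℕ), 1 ≤ n → ∀ z : ℕ → Fin d → ℤ, IsPath z n →
        n ≤ max (max (linf (z 0)) (linf (z n))) (l1 (z 0 - z n)) →
        c₁ * n * ((max (linf (z 0)) (linf (z n)) : ℕ) : ℝ) ^ α ≤
            ∑ i ∈ Finset.range (n + 1), nu α (z i) ∧
          ∑ i ∈ Finset.range (n + 1), nu α (z i) ≤
            c₂ * n * ((max (linf (z 0)) (linf (z n)) : ℕ) : ℝ) ^ α := by
  have hdr : (0 : ℝ) < d := by exact_mod_cast hd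
  rcases le_or_gt 0 α with hα0 | hα0
  · exact ⟨1 / (4 * d * 2 ^ α), 2 * (2 * d + 1) ^ α, by positivity, by positivity,
      fun n hn z hz hlen => ⟨le_sum_nu_of_nonneg hz hd hα0 hlen,
        sum_nu_le_of_nonneg hz hd hα0 hn hlen⟩⟩
  · refine ⟨(2 * d + 1) ^ α, 2 * (1 + 1 / (1 + α)) / (2 * d) ^ α, by positivity, ?_,
      fun n hn z hz hlen => ⟨le_sum_nu_of_nonpos hz hd hα0.le hn hlen,
        sum_nu_le_of_nonpos hz hd hα hα0.le hn hlen⟩⟩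
    have hp : 0 < 1 / (1 + α) := one_div_pos.mpr (by linarith)
    positivity
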